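/- arXiv:1007.0071 — 5 statements merged into one kernel-verified Lean document; each statement's English description precedes it below -/
import Mathlib

section
/- For every t ∈ [0,1], the point p(t) = (1-t)·(-20/29, 35/29) + t·(0, 15/29) on the closed line segment ℓ₁ connecting (-20/29, 35/29) to (0, 15/29) satisfies L⁴(p(t)) = p(t), where L is the Lozi map with parameters a = 1.4, b = 0.4. -/
theorem lozi_period4_segment (t : ℝ) (ht : t ∈ Set.Icc (0:ℝ) 1) :
    (fun p : ℝ × ℝ => (1 - 1.4 * |p.1| + 0.4 * p.2, p.1))^[4]
      ((1 - t) • ((-20/29 : ℝ), (35/29 : ℝ)) + t • ((0 : ℝ), (15/29 : ℝ))) =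
      (1 - t) • ((-20/29 : ℝ), (35/29 : ℝ)) + t • ((0 : ℝ), (15/29 : ℝ)) := by
  obtain ⟨h0, h1⟩ := ht
  set f : ℝ × ℝ → ℝ × ℝ := fun p => (1 - 1.4 * |p.1| + 0.4 * p.2, p.1) with hf
  have hp : (1 - t) • ((-20/29 : ℝ), (35/29 : ℝ)) + t • ((0 : ℝ), (15/29 : ℝ))
      = ((-20*(1-t)/29 : ℝ), ((35 - 20*t)/29 : ℝ)) := by
    simp [Prod.ext_iff, smul_eq_mul]
    constructor <;> ring
  rw [hp]
  have e1 : f ((-20*(1-t)/29 : ℝ), ((35 - 20*t)/29 : ℝ))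
      = (((15 + 20*t)/29 : ℝ), (-20*(1-t)/29 : ℝ)) := by
    simp only [hf]
    rw [abs_of_nonpos (by nlinarith)]
    norm_num; ring
  have e2 : f (((15 + 20*t)/29 : ℝ), (-20*(1-t)/29 : ℝ))
      = ((-20*t/29 : ℝ), ((15 + 20*t)/29 : ℝ)) := by
    simp only [hf]
    rw [abs_of_nonneg (by nlinarith)]
    norm_num; ring
  have e3 : f ((-20*t/29 : ℝ), ((15 + 20*t)/29 : ℝ))
      = (((35 - 20*t)/29 : ℝ), (-20*t/29 : ℝ)) := by
    simp only [hf]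
    rw [abs_of_nonpos (by nlinarith)]
    norm_num; ring
  have e4 : f (((35 - 20*t)/29 : ℝ), (-20*t/29 : ℝ))
      = ((-20*(1-t)/29 : ℝ), ((35 - 20*t)/29 : ℝ)) := by
    simp only [hf]
    rw [abs_of_nonneg (by nlinarith)]
    norm_num; ring
  show f (f (f (f _))) = _
  rw [e1, e2, e3, e4]
end

section
/- For every t ∈ [0,1], the point q(t) = (1-t)·(15/29, -20/29) + t·(35/29, 0) on the closed line segment connecting (15/29, -20/29) to (35/29, 0) satisfies L⁴(q(t)) = q(t), where L is the Lozi map with parameters a = 1.4, b = 0.4. -/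
theorem lozi_period4_segment_image (t : ℝ) (ht : t ∈ Set.Icc (0:ℝ) 1) :
    (fun p : ℝ × ℝ => (1 - 1.4 * |p.1| + 0.4 * p.2, p.1))^[4]
      ((1 - t) • ((15/29 : ℝ), (-20/29 : ℝ)) + t • ((35/29 : ℝ), (0 : ℝ))) =
      (1 - t) • ((15/29 : ℝ), (-20/29 : ℝ)) + t • ((35/29 : ℝ), (0 : ℝ)) := by
  obtain ⟨h0, h1⟩ := ht
  set f : ℝ × ℝ → ℝ × ℝ := fun p => (1 - 1.4 * |p.1| + 0.4 * p.2, p.1) with hf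
  have e : (1 - t) • ((15/29 : ℝ), (-20/29 : ℝ)) + t • ((35/29 : ℝ), (0 : ℝ))
      = ((15 + 20*t)/29, (20*t - 20)/29) := by
    simp [Prod.ext_iff, smul_eq_mul]
    constructor <;> ring
  have s1 : f ((15 + 20*t)/29, (20*t - 20)/29) = (-(20*t)/29, (15 + 20*t)/29) := by
    simp only [hf]
    rw [abs_of_nonneg (by linarith : ((15 + 20*t)/29 : ℝ) ≥ 0)]
    norm_num
    ring
  have s2 : f (-(20*t)/29, (15 + 20*t)/29) = ((35 - 20*t)/29, -(20*t)/29) := by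
    simp only [hf]
    rw [abs_of_nonpos (by linarith : (-(20*t)/29 : ℝ) ≤ 0)]
    norm_num
    ring
  have s3 : f ((35 - 20*t)/29, -(20*t)/29) = ((20*t - 20)/29, (35 - 20*t)/29) := by
    simp only [hf]
    rw [abs_of_nonneg (by linarith : ((35 - 20*t)/29 : ℝ) ≥ 0)]
    norm_num
    ring
  have s4 : f ((20*t - 20)/29, (35 - 20*t)/29) = ((15 + 20*t)/29, (20*t - 20)/29) := by
    simp only [hf]
    rw [abs_of_nonpos (by linarith : ((20*t - 20)/29 : ℝ) ≤ 0)]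
    norm_num
    ring
  rw [e]
  show f^[4] _ = _
  simp only [Function.iterate_succ, Function.iterate_zero, Function.comp_apply, id_eq,
    s1, s2, s3, s4]
end

section
/- If (x, y) ∈ ℝ² satisfies x < 0, y < 0, 1 + 1.4x + 0.4y < 0, and 1 + 1.4(1 + 1.4x + 0.4y) + 0.4x < 0, and L⁴(x,y) = (x,y), then (x,y) = (-5/4, -5/4), where L is the Lozi map with parameters a = 1.4, b = 0.4. -/
theorem lozi_domain16_fixed_point (x y : ℝ)
    (hx : x < 0) (hy : y < 0)
    (hC : 1 + 1.4 * x + 0.4 * y < 0)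
    (hB : 1 + 1.4 * (1 + 1.4 * x + 0.4 * y) + 0.4 * x < 0)
    (hfix : (fun p : ℝ × ℝ => (1 - 1.4 * |p.1| + 0.4 * p.2, p.1))^[4] (x, y) = (x, y)) :
    (x, y) = ((-5:ℝ)/4, (-5:ℝ)/4) := by
  simp only [Function.iterate_succ, Function.iterate_zero, Function.comp_apply, id_eq,
    Prod.mk.injEq] at hfix
  rw [abs_of_neg hx] at hfix
  have e1 : (1:ℝ) - 1.4 * -x + 0.4 * y = 1 + 1.4*x + 0.4*y := by ring
  rw [e1, abs_of_neg hC] at hfix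
  have e2 : (1:ℝ) - 1.4 * -(1 + 1.4*x + 0.4*y) + 0.4 * x = 1 + 1.4 * (1 + 1.4 * x + 0.4 * y) + 0.4 * x := by ring
  rw [e2, abs_of_neg hB] at hfix
  obtain ⟨h1, h2⟩ := hfix
  rw [h2, abs_of_neg hy] at h1
  have hxy : x = y := by linarith
  subst hxy
  rw [Prod.mk.injEq]
  constructor <;> linarith
end

section
/- Every fixed point of L⁴ (where L is the Lozi map with a = 1.4, b = 0.4) is one of: (1/2,1/2), (-5/4,-5/4), a point of the closed segment from (-20/29, 35/29) to (0, 15/29), or a point of the closed segment from (15/29, -20/29) to (35/29, 0). -/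
set_option maxHeartbeats 8000000
theorem lozi_fourth_iterate_fixed_points (p : ℝ × ℝ)
    (hfix : (fun q : ℝ × ℝ => (1 - 1.4 * |q.1| + 0.4 * q.2, q.1))^[4] p = p) :
    p = (1/2, 1/2) ∨ p = (-5/4, -5/4) ∨
      p ∈ segment ℝ ((-20/29 : ℝ), (35/29 : ℝ)) ((0 : ℝ), (15/29 : ℝ)) ∨
      p ∈ segment ℝ ((15/29 : ℝ), (-20/29 : ℝ)) ((35/29 : ℝ), (0 : ℝ)) := by
  obtain ⟨x, y⟩ := p
  simp only [Function.iterate_succ, Function.iterate_zero, Function.comp_apply, id_eq,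
    Prod.mk.injEq] at hfix
  obtain ⟨h1, h2⟩ := hfix
  rcases abs_cases (x) with ⟨hq1, hs1⟩ | ⟨hq1, hs1⟩ <;> rw [hq1] at h1 h2
  ·
    rcases abs_cases (1 - 1.4 * x + 0.4 * y) with ⟨hq2, hs2⟩ | ⟨hq2, hs2⟩ <;> rw [hq2] at h1 h2
    ·
      rcases abs_cases (1 - 1.4 * (1 - 1.4 * x + 0.4 * y) + 0.4 * x) with ⟨hq3, hs3⟩ | ⟨hq3, hs3⟩ <;> rw [hq3] at h1 h2
      ·
        rcases abs_cases (1 - 1.4 * (1 - 1.4 * (1 - 1.4 * x + 0.4 * y) + 0.4 * x) + 0.4 * (1 - 1.4 * x + 0.4 * y)) with ⟨hq4, hs4⟩ | ⟨hq4, hs4⟩ <;> rw [hq4] at h1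
        ·
          exact Or.inl (by simp only [Prod.mk.injEq]; constructor <;> linarith)
        ·
          refine Or.inr (Or.inr (Or.inr ?_))
          refine ⟨(1:ℝ), (0:ℝ), by linarith, by linarith, by ring, ?_⟩
          simp only [Prod.smul_mk, smul_eq_mul, Prod.mk_add_mk, Prod.mk.injEq]
          constructor <;> linarith
      ·
        rcases abs_cases (1 - 1.4 * (-(1 - 1.4 * (1 - 1.4 * x + 0.4 * y) + 0.4 * x)) + 0.4 * (1 - 1.4 * x + 0.4 * y)) with ⟨hq4, hs4⟩ | ⟨hq4, hs4⟩ <;> rw [hq4] at h1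
        ·
          refine Or.inr (Or.inr (Or.inl ?_))
          refine ⟨(0:ℝ), (1:ℝ), by linarith, by linarith, by ring, ?_⟩
          simp only [Prod.smul_mk, smul_eq_mul, Prod.mk_add_mk, Prod.mk.injEq]
          constructor <;> linarith
        ·
          exfalso; linarith
    ·
      rcases abs_cases (1 - 1.4 * (-(1 - 1.4 * x + 0.4 * y)) + 0.4 * x) with ⟨hq3, hs3⟩ | ⟨hq3, hs3⟩ <;> rw [hq3] at h1 h2
      ·
        rcases abs_cases (1 - 1.4 * (1 - 1.4 * (-(1 - 1.4 * x + 0.4 * y)) + 0.4 * x) + 0.4 * (1 - 1.4 * x + 0.4 * y)) with ⟨hq4, hs4⟩ | ⟨hq4, hs4⟩ <;> rw [hq4] at h1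
        ·
          refine Or.inr (Or.inr (Or.inr ?_))
          refine ⟨(0:ℝ), (1:ℝ), by linarith, by linarith, by ring, ?_⟩
          simp only [Prod.smul_mk, smul_eq_mul, Prod.mk_add_mk, Prod.mk.injEq]
          constructor <;> linarith
        ·
          refine Or.inr (Or.inr (Or.inr ?_))
          refine ⟨(7/4-29/20*x), (29/20*x-3/4), by linarith, by linarith, by ring, ?_⟩
          simp only [Prod.smul_mk, smul_eq_mul, Prod.mk_add_mk, Prod.mk.injEq]
          constructor <;> linarith
      ·
        rcases abs_cases (1 - 1.4 * (-(1 - 1.4 * (-(1 - 1.4 * x + 0.4 * y)) + 0.4 * x)) + 0.4 * (1 - 1.4 * x + 0.4 * y)) with ⟨hq4, hs4⟩ | ⟨hq4, hs4⟩ <;> rw [hq4] at h1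
        ·
          exfalso; linarith
        ·
          exfalso; linarith
  ·
    rcases abs_cases (1 - 1.4 * (-x) + 0.4 * y) with ⟨hq2, hs2⟩ | ⟨hq2, hs2⟩ <;> rw [hq2] at h1 h2
    ·
      rcases abs_cases (1 - 1.4 * (1 - 1.4 * (-x) + 0.4 * y) + 0.4 * x) with ⟨hq3, hs3⟩ | ⟨hq3, hs3⟩ <;> rw [hq3] at h1 h2
      ·
        rcases abs_cases (1 - 1.4 * (1 - 1.4 * (1 - 1.4 * (-x) + 0.4 * y) + 0.4 * x) + 0.4 * (1 - 1.4 * (-x) + 0.4 * y)) with ⟨hq4, hs4⟩ | ⟨hq4, hs4⟩ <;> rw [hq4] at h1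
        ·
          refine Or.inr (Or.inr (Or.inl ?_))
          refine ⟨(1:ℝ), (0:ℝ), by linarith, by linarith, by ring, ?_⟩
          simp only [Prod.smul_mk, smul_eq_mul, Prod.mk_add_mk, Prod.mk.injEq]
          constructor <;> linarith
        ·
          exfalso; linarith
      ·
        rcases abs_cases (1 - 1.4 * (-(1 - 1.4 * (1 - 1.4 * (-x) + 0.4 * y) + 0.4 * x)) + 0.4 * (1 - 1.4 * (-x) + 0.4 * y)) with ⟨hq4, hs4⟩ | ⟨hq4, hs4⟩ <;> rw [hq4] at h1
        ·
          refine Or.inr (Or.inr (Or.inl ?_))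
          refine ⟨(-29/20*x), (1+29/20*x), by linarith, by linarith, by ring, ?_⟩
          simp only [Prod.smul_mk, smul_eq_mul, Prod.mk_add_mk, Prod.mk.injEq]
          constructor <;> linarith
        ·
          exfalso; linarith
    ·
      rcases abs_cases (1 - 1.4 * (-(1 - 1.4 * (-x) + 0.4 * y)) + 0.4 * x) with ⟨hq3, hs3⟩ | ⟨hq3, hs3⟩ <;> rw [hq3] at h1 h2
      ·
        rcases abs_cases (1 - 1.4 * (1 - 1.4 * (-(1 - 1.4 * (-x) + 0.4 * y)) + 0.4 * x) + 0.4 * (1 - 1.4 * (-x) + 0.4 * y)) with ⟨hq4, hs4⟩ | ⟨hq4, hs4⟩ <;> rw [hq4] at h1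
        ·
          exfalso; linarith
        ·
          exfalso; linarith
      ·
        rcases abs_cases (1 - 1.4 * (-(1 - 1.4 * (-(1 - 1.4 * (-x) + 0.4 * y)) + 0.4 * x)) + 0.4 * (1 - 1.4 * (-x) + 0.4 * y)) with ⟨hq4, hs4⟩ | ⟨hq4, hs4⟩ <;> rw [hq4] at h1
        ·
          exfalso; linarith
        ·
          exact Or.inr (Or.inl (by simp only [Prod.mk.injEq]; constructor <;> linarith))
end

section
/- Let L be the Lozi map with a = 1.4, b = 0.4. If (x,y) satisfies x < 0, C := 1 + 1.4x + 0.4y < 0, B := 1 + 1.4C + 0.4x ≥ 0, and A := 1 - 1.4B + 0.4C ≥ 0, then L⁴(x,y) ≠ (x,y); i.e., there are no fixed points of L⁴ in this affine domain. -/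
theorem lozi_domain8_no_fixed_point (x y : ℝ)
    (hx : x < 0)
    (hC : 1 + 1.4 * x + 0.4 * y < 0)
    (hB : 0 ≤ 1 + 1.4 * (1 + 1.4 * x + 0.4 * y) + 0.4 * x)
    (hA : 0 ≤ 1 - 1.4 * (1 + 1.4 * (1 + 1.4 * x + 0.4 * y) + 0.4 * x)
            + 0.4 * (1 + 1.4 * x + 0.4 * y)) :
    (fun p : ℝ × ℝ => (1 - 1.4 * |p.1| + 0.4 * p.2, p.1))^[4] (x, y) ≠ (x, y) := by
  intro h
  simp only [Function.iterate_succ, Function.iterate_zero, Function.comp_apply, id_eq] at h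
  rw [abs_of_neg hx] at h
  rw [show 1 - 1.4 * -x + 0.4 * y = 1 + 1.4 * x + 0.4 * y by ring, abs_of_neg hC] at h
  rw [show 1 - 1.4 * -(1 + 1.4 * x + 0.4 * y) + 0.4 * x = 1 + 1.4 * (1 + 1.4 * x + 0.4 * y) + 0.4 * x by ring, abs_of_nonneg hB] at h
  rw [abs_of_nonneg hA] at h
  obtain ⟨h1, h2⟩ := Prod.mk.injEq .. ▸ h
  linarith
end
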